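/- Let ν(n) be the sum of the squares of the coefficients of F_n(x) = ∏_{i=0}^{n-1}(1 + x^{2^i} + x^{2^{i+1}}). Then the generating function identity Σ_{n≥0} ν(n) x^n = (1 − 2x)/(1 − 5x + 2x^2) holds as an equality of formal power series over the rationals. -/

import Mathlib

/-!
Write `⟪p, q⟫ = ∑ₖ pₖ qₖ` (`coeffDot p q`). Since
`F_{n+1}(x) = F_n(x²)(1 + x + x²) = u(x²) + x v(x²)` with `u = (1 + x) F_n` and `v = F_n`, and
even and odd parts are orthogonal for `⟪·, ·⟫`, the numbers `a_n = ⟪F_n, F_n⟫ = ν(n)` and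
`b_n = ⟪x F_n, F_n⟫` satisfy `a_{n+1} = 3 a_n + 2 b_n` and `b_{n+1} = 2 a_n + 2 b_n`.
Eliminating `b` gives `ν(n + 2) = 5 ν(n + 1) - 2 ν(n)` with `ν(0) = 1`, `ν(1) = 3`, which is the
stated generating function.
-/

open Polynomial Finset

lemma Finset.sum_range_two_mul {M : Type*} [AddCommMonoid M] (f : ℕ → M) (n : ℕ) :
    ∑ k ∈ range (2 * n), f k = ∑ m ∈ range n, (f (2 * m) + f (2 * m + 1)) := by
  induction n with
  | zero => simp
  | succ n ih => rw [mul_add, mul_one, sum_range_succ, sum_range_succ, sum_range_succ, ih, add_assoc]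

section CoeffDot

variable {R : Type*} [CommSemiring R]

noncomputable def coeffDot (p q : R[X]) : R := p.sum fun k a => a * q.coeff k

lemma coeffDot_eq_sum_range {p : R[X]} (q : R[X]) {n : ℕ} (hn : p.natDegree < n) :
    coeffDot p q = ∑ k ∈ range n, p.coeff k * q.coeff k :=
  sum_over_range' p (f := fun k a => a * q.coeff k) (fun _ => zero_mul _) n hn

lemma coeffDot_comm (p q : R[X]) : coeffDot p q = coeffDot q p := by
  let n := max p.natDegree q.natDegree + 1
  rw [coeffDot_eq_sum_range q (n := n) (by omega), coeffDot_eq_sum_range p (n := n) (by omega)]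
  simp only [mul_comm]

lemma coeffDot_add_left (p p' q : R[X]) :
    coeffDot (p + p') q = coeffDot p q + coeffDot p' q := by
  let n := max p.natDegree p'.natDegree + 1
  rw [coeffDot_eq_sum_range q (n := n) ((natDegree_add_le _ _).trans_lt (by omega)),
    coeffDot_eq_sum_range q (n := n) (by omega), coeffDot_eq_sum_range q (n := n) (by omega),
    ← sum_add_distrib]
  simp only [coeff_add, add_mul]

lemma coeffDot_add_right (p q q' : R[X]) :
    coeffDot p (q + q') = coeffDot p q + coeffDot p q' := by
  simp only [coeffDot_comm p, coeffDot_add_left]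

lemma coeffDot_one_right (p : R[X]) : coeffDot p 1 = p.coeff 0 := by
  by_cases h : p.coeff 0 = 0 <;> simp [coeffDot, Polynomial.sum_def, coeff_one, h]

lemma coeffDot_X_mul_X_mul (p q : R[X]) : coeffDot (X * p) (X * q) = coeffDot p q := by
  have hdeg : (X * p).natDegree < p.natDegree + 2 := by
    have := natDegree_mul_le (p := (X : R[X])) (q := p)
    have := natDegree_X_le (R := R)
    omega
  rw [coeffDot_eq_sum_range _ hdeg, coeffDot_eq_sum_range q (Nat.lt_succ_self _), sum_range_succ']
  simp [coeff_X_mul]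

lemma coeff_expand_two_odd (w : R[X]) (m : ℕ) : (expand R 2 w).coeff (2 * m + 1) = 0 := by
  rw [coeff_expand two_pos, if_neg (by omega)]

lemma coeff_expand_two_add_X_mul_even (u v : R[X]) (m : ℕ) :
    (expand R 2 u + X * expand R 2 v).coeff (2 * m) = u.coeff m := by
  rw [coeff_add, coeff_expand_mul' two_pos]
  rcases m with _ | m
  · rw [mul_zero, coeff_X_mul_zero, add_zero]
  · rw [mul_add, mul_one, coeff_X_mul, coeff_expand_two_odd, add_zero]

lemma coeff_expand_two_add_X_mul_odd (u v : R[X]) (m : ℕ) :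
    (expand R 2 u + X * expand R 2 v).coeff (2 * m + 1) = v.coeff m := by
  rw [coeff_add, coeff_expand_two_odd, coeff_X_mul, coeff_expand_mul' two_pos, zero_add]

lemma coeffDot_expand_two_add_X_mul (u v u' v' : R[X]) :
    coeffDot (expand R 2 u + X * expand R 2 v) (expand R 2 u' + X * expand R 2 v') =
      coeffDot u u' + coeffDot v v' := by
  let n := max u.natDegree v.natDegree + 1
  have hdeg : (expand R 2 u + X * expand R 2 v).natDegree < 2 * n := by
    have := natDegree_add_le (expand R 2 u) (X * expand R 2 v)
    have := natDegree_mul_le (p := (X : R[X])) (q := expand R 2 v)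
    have := natDegree_X_le (R := R)
    simp only [natDegree_expand] at *
    omega
  rw [coeffDot_eq_sum_range _ hdeg, coeffDot_eq_sum_range u' (n := n) (by omega),
    coeffDot_eq_sum_range v' (n := n) (by omega), sum_range_two_mul, ← sum_add_distrib]
  simp only [coeff_expand_two_add_X_mul_even, coeff_expand_two_add_X_mul_odd]

lemma expand_two_mul_one_add_X_add_X_sq (p : R[X]) :
    expand R 2 p * (1 + X + X ^ 2) = expand R 2 ((1 + X) * p) + X * expand R 2 p := by
  simp only [map_mul, map_add, map_one, expand_X]
  ring

lemma X_mul_expand_two_add_X_mul (u v : R[X]) :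
    X * (expand R 2 u + X * expand R 2 v) = expand R 2 (X * v) + X * expand R 2 u := by
  simp only [map_mul, expand_X]
  ring

lemma coeffDot_self_expand_two_mul (p : R[X]) :
    coeffDot (expand R 2 p * (1 + X + X ^ 2)) (expand R 2 p * (1 + X + X ^ 2)) =
      3 * coeffDot p p + 2 * coeffDot (X * p) p := by
  rw [expand_two_mul_one_add_X_add_X_sq, coeffDot_expand_two_add_X_mul, add_mul, one_mul,
    coeffDot_add_left, coeffDot_add_right, coeffDot_add_right, coeffDot_X_mul_X_mul,
    coeffDot_comm p (X * p)]
  ring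

lemma coeffDot_X_mul_expand_two_mul (p : R[X]) :
    coeffDot (X * (expand R 2 p * (1 + X + X ^ 2))) (expand R 2 p * (1 + X + X ^ 2)) =
      2 * coeffDot p p + 2 * coeffDot (X * p) p := by
  rw [expand_two_mul_one_add_X_add_X_sq, X_mul_expand_two_add_X_mul,
    coeffDot_expand_two_add_X_mul, add_mul, one_mul, coeffDot_add_left, coeffDot_add_right,
    coeffDot_X_mul_X_mul]
  ring

lemma prod_range_succ_one_add_X_pow_two_pow (n : ℕ) :
    ∏ i ∈ range (n + 1), (1 + X ^ 2 ^ i + X ^ 2 ^ (i + 1) : R[X]) =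
      expand R 2 (∏ i ∈ range n, (1 + X ^ 2 ^ i + X ^ 2 ^ (i + 1))) * (1 + X + X ^ 2) := by
  rw [prod_range_succ', map_prod]
  simp only [map_add, map_one, map_pow, expand_X, ← pow_mul, ← pow_succ', pow_zero, zero_add,
    pow_one]

end CoeffDot

lemma coeffDot_self_recurrence {R : Type*} [CommRing R] (F : ℕ → R[X])
    (hF : ∀ n, F (n + 1) = expand R 2 (F n) * (1 + X + X ^ 2)) (n : ℕ) :
    coeffDot (F (n + 2)) (F (n + 2)) =
      5 * coeffDot (F (n + 1)) (F (n + 1)) - 2 * coeffDot (F n) (F n) := by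
  have h₀ := coeffDot_self_expand_two_mul (F n)
  have h₁ := coeffDot_X_mul_expand_two_mul (F n)
  have h₂ := coeffDot_self_expand_two_mul (F (n + 1))
  rw [← hF] at h₀ h₁ h₂
  linear_combination h₂ + 2 * h₁ - 2 * h₀

lemma PowerSeries.mk_mul_one_sub_C_mul_X_sub_C_mul_X_sq {R : Type*} [CommRing R] (a : ℕ → R)
    (c d : R) (h : ∀ n, a (n + 2) = c * a (n + 1) + d * a n) :
    mk a * (1 - C c * X - C d * X ^ 2) = C (a 0) + C (a 1 - c * a 0) * X := by
  rw [show mk a * (1 - C c * X - C d * X ^ 2) = mk a - C c * (mk a * X) - C d * (mk a * X ^ 2) by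
    ring]
  ext (_ | _ | n) <;> simp [coeff_mul_X_pow', h]

theorem stmt_5 (F : ℕ → Polynomial ℚ) (ν : ℕ → ℚ)
    (hF : ∀ n, F n = ∏ i ∈ Finset.range n,
      (1 + (Polynomial.X : Polynomial ℚ) ^ (2 ^ i) + Polynomial.X ^ (2 ^ (i + 1))))
    (hν : ∀ n, ν n = ∑ k ∈ (F n).support, ((F n).coeff k) ^ 2) :
    PowerSeries.mk ν =
      (1 - 2 * PowerSeries.X) *
        (1 - 5 * PowerSeries.X + 2 * PowerSeries.X ^ 2 : PowerSeries ℚ)⁻¹ := by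
  have hstep (n : ℕ) : F (n + 1) = expand ℚ 2 (F n) * (1 + X + X ^ 2) := by
    rw [hF, hF, prod_range_succ_one_add_X_pow_two_pow]
  have hν_eq (n : ℕ) : ν n = coeffDot (F n) (F n) := by
    simp only [hν, coeffDot, Polynomial.sum_def, sq]
  have hF₀ : F 0 = 1 := by rw [hF, prod_range_zero]
  have hν₀ : ν 0 = 1 := by rw [hν_eq, hF₀, coeffDot_one_right, coeff_one_zero]
  have hν₁ : ν 1 = 3 := by
    rw [hν_eq, hstep, hF₀, coeffDot_self_expand_two_mul, mul_one, coeffDot_one_right,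
      coeffDot_one_right, coeff_one_zero, coeff_X_zero]
    norm_num
  rw [PowerSeries.eq_mul_inv_iff_mul_eq (by simp)]
  convert PowerSeries.mk_mul_one_sub_C_mul_X_sub_C_mul_X_sq ν 5 (-2)
    (fun n => by simp only [hν_eq, coeffDot_self_recurrence F hstep]; ring) using 1
  · rw [map_neg, map_ofNat, map_ofNat]
    ring
  · rw [hν₀, hν₁, map_one, show (3 : ℚ) - 5 * 1 = -2 by norm_num, map_neg, map_ofNat]
    ring
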